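/- T_H semantically entails both ∀x(x∈H⁻ → x∈H⁺) and ∀x(x∈H⁺ → x∈H⁻), and hence, by extensionality, T_H semantically entails H⁺ = H⁻. -/

import Mathlib

open FirstOrder FirstOrder.Language

namespace CoRussellParadox

/-- The language `L'` with a single binary relation symbol `∈` and four constant
symbols `A`, `B`, `H⁺`, `H⁻` (coded as `Fin 4`). -/
def L : Language :=
  ⟨fun n => match n with | 0 => Fin 4 | _ => Empty,
   fun n => match n with | 2 => Unit | _ => Empty⟩

/-- The membership relation symbol. -/
def memRel : L.Relations 2 := Unit.unit

/-- The constant symbol `A`. -/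
def cA : L.Constants := (0 : Fin 4)
/-- The constant symbol `B`. -/
def cB : L.Constants := (1 : Fin 4)
/-- The constant symbol `H⁺`. -/
def cHp : L.Constants := (2 : Fin 4)
/-- The constant symbol `H⁻`. -/
def cHm : L.Constants := (3 : Fin 4)

/-- `memF t₁ t₂` is the atomic formula `t₁ ∈ t₂`. -/
def memF {n : ℕ} (t₁ t₂ : L.Term (Empty ⊕ Fin n)) : L.BoundedFormula Empty n :=
  memRel.boundedFormula₂ t₁ t₂

/-- Inclusion of a term in context `n` into the larger context `n + k`. -/
def tl {n : ℕ} (k : ℕ) (t : L.Term (Empty ⊕ Fin n)) : L.Term (Empty ⊕ Fin (n + k)) :=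
  t.relabel (Sum.map id (Fin.castAdd k))

/-- `z = ⟨a,b⟩` (Kuratowski pair), as the formula
`∃p∃q(∀x(x∈p ↔ x=a) ∧ ∀x(x∈q ↔ (x=a ∨ x=b)) ∧ ∀x(x∈z ↔ (x=p ∨ x=q)))`. -/
def isPairF {n : ℕ} (z a b : L.Term (Empty ⊕ Fin n)) : L.BoundedFormula Empty n :=
  ∃' ∃' (
    (∀' (memF (&⟨n + 2, by omega⟩) (&⟨n, by omega⟩) ⇔
        ((&(⟨n + 2, by omega⟩ : Fin (n + 3))) =' tl 3 a))) ⊓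
    (∀' (memF (&⟨n + 2, by omega⟩) (&⟨n + 1, by omega⟩) ⇔
        (((&(⟨n + 2, by omega⟩ : Fin (n + 3))) =' tl 3 a) ⊔
         ((&(⟨n + 2, by omega⟩ : Fin (n + 3))) =' tl 3 b)))) ⊓
    (∀' (memF (&⟨n + 2, by omega⟩) (tl 3 z) ⇔
        (((&(⟨n + 2, by omega⟩ : Fin (n + 3))) =' (&⟨n, by omega⟩)) ⊔
         ((&(⟨n + 2, by omega⟩ : Fin (n + 3))) =' (&⟨n + 1, by omega⟩))))))

/-- Extensionality: `∀y∀z(∀x(x∈y ↔ x∈z) → y=z)`. -/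
def extAx : L.Sentence :=
  ∀' ∀' ((∀' (memF (&2) (&0) ⇔ memF (&2) (&1))) ⟹ ((&0) =' (&1)))

/-- Pairing: `∀a∀b∃y∀x(x∈y ↔ (x=a ∨ x=b))`. -/
def pairAx : L.Sentence :=
  ∀' ∀' ∃' ∀' (memF (&3) (&2) ⇔ (((&3) =' (&0)) ⊔ ((&3) =' (&1))))

/-- Extracting: `∀a∃y∀x(x∈y ↔ ∃z(z=⟨a,x⟩ ∧ z∈a))`. -/
def extractAx : L.Sentence :=
  ∀' ∃' ∀' (memF (&2) (&1) ⇔ ∃' (isPairF (&3) (&0) (&2) ⊓ memF (&3) (&0)))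

/-- `w = v[v]`, i.e. `∀u(u∈w ↔ ∃z(z=⟨v,u⟩ ∧ z∈v))`, here with `v = &1`, `w = &2`
in context `3` (as used in the axioms for `A` and `B`). -/
def wEqExtractF : L.BoundedFormula Empty 3 :=
  ∀' (memF (&3) (&2) ⇔ ∃' (isPairF (&4) (&1) (&3) ⊓ memF (&4) (&1)))

/-- The axiom `∀x(x∈A ↔ ∃v∃w(x=⟨v,w⟩ ∧ (w∈w ∨ w=v[v])))`. -/
def axA : L.Sentence :=
  ∀' (memF (&0) (Constants.term cA) ⇔
    ∃' ∃' (isPairF (&0) (&1) (&2) ⊓ (memF (&2) (&2) ⊔ wEqExtractF)))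

/-- The axiom `∀x(x∈B ↔ ∃v∃w(x=⟨v,w⟩ ∧ (w∈w ∧ ¬w=v[v])))`. -/
def axB : L.Sentence :=
  ∀' (memF (&0) (Constants.term cB) ⇔
    ∃' ∃' (isPairF (&0) (&1) (&2) ⊓ (memF (&2) (&2) ⊓ ∼wEqExtractF)))

/-- The axiom `∀x(x∈H⁺ ↔ ∃z(z=⟨A,x⟩ ∧ z∈A))`. -/
def axHp : L.Sentence :=
  ∀' (memF (&0) (Constants.term cHp) ⇔
    ∃' (isPairF (&1) (Constants.term cA) (&0) ⊓ memF (&1) (Constants.term cA)))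

/-- The axiom `∀x(x∈H⁻ ↔ ∃z(z=⟨B,x⟩ ∧ z∈B))`. -/
def axHm : L.Sentence :=
  ∀' (memF (&0) (Constants.term cHm) ⇔
    ∃' (isPairF (&1) (Constants.term cB) (&0) ⊓ memF (&1) (Constants.term cB)))

/-- The theory `T_H`: extensionality, pairing, extracting, and the defining axioms
of `A`, `B`, `H⁺` and `H⁻`. -/
def TH : L.Theory := {extAx, pairAx, extractAx, axA, axB, axHp, axHm}

/-!
Kuratowski pairs are determined by their components, so the axioms for `A` and `B` give
`x ∈ H⁺ ↔ x ∈ x ∨ x = A[A]` and `x ∈ H⁻ ↔ x ∈ x ∧ x ≠ B[B]`, where by extensionality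
`A[A] = H⁺` and `B[B] = H⁻`. The first puts `H⁺` into itself; the second, as in Russell's
paradox, keeps `H⁻` out of itself. Hence both `H⁺` and `H⁻` consist exactly of the `x` with
`x ∈ x`, and extensionality identifies them.
-/

section Membership

variable {α : Type*} (r : α → α → Prop)

def IsKPair (z a b : α) : Prop :=
  ∃ p q, (∀ x, r x p ↔ x = a) ∧ (∀ x, r x q ↔ x = a ∨ x = b) ∧ (∀ x, r x z ↔ x = p ∨ x = q)

/-- `w = v[v]` in the paper's notation. -/
def IsExtract (w v : α) : Prop :=
  ∀ u, r u w ↔ ∃ z, IsKPair r z v u ∧ r z v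

def Extensional : Prop :=
  ∀ y z, (∀ x, r x y ↔ r x z) → y = z

variable {r}

theorem IsKPair.forall_mem_iff {z a b x : α} (h : IsKPair r z a b) :
    (∀ y, r y z → r x y) ↔ x = a := by
  obtain ⟨p, q, hp, hq, hz⟩ := h
  refine ⟨fun hx => (hp x).1 (hx p ((hz p).2 (.inl rfl))), ?_⟩
  rintro rfl y hy
  rcases (hz y).1 hy with rfl | rfl
  exacts [(hp x).2 rfl, (hq x).2 (.inl rfl)]

theorem IsKPair.exists_mem_iff {z a b x : α} (h : IsKPair r z a b) :
    (∃ y, r y z ∧ r x y) ↔ x = a ∨ x = b := by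
  obtain ⟨p, q, hp, hq, hz⟩ := h
  refine ⟨?_, fun hx => ⟨q, (hz q).2 (.inr rfl), (hq x).2 hx⟩⟩
  rintro ⟨y, hy, hxy⟩
  rcases (hz y).1 hy with rfl | rfl
  exacts [.inl ((hp x).1 hxy), (hq x).1 hxy]

theorem IsKPair.inj {z a b c d : α} (h₁ : IsKPair r z a b) (h₂ : IsKPair r z c d) :
    a = c ∧ b = d := by
  obtain rfl : a = c := h₂.forall_mem_iff.1 (h₁.forall_mem_iff.2 rfl)
  have hbd : ∀ x, x = a ∨ x = b ↔ x = a ∨ x = d := fun x =>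
    h₁.exists_mem_iff.symm.trans h₂.exists_mem_iff
  exact ⟨rfl, by grind [hbd b, hbd d]⟩

theorem exists_isKPair (hpair : ∀ a b, ∃ y, ∀ x, r x y ↔ x = a ∨ x = b) (a b : α) :
    ∃ z, IsKPair r z a b := by
  obtain ⟨p, hp⟩ := hpair a a
  obtain ⟨q, hq⟩ := hpair a b
  obtain ⟨z, hz⟩ := hpair p q
  exact ⟨z, p, q, fun x => (hp x).trans or_self_iff, hq, hz⟩

theorem exists_isKPair_and_mem_iff {P : α → α → Prop} {C : α}
    (hpair : ∀ a b, ∃ y, ∀ x, r x y ↔ x = a ∨ x = b)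
    (hC : ∀ z, r z C ↔ ∃ v w, IsKPair r z v w ∧ P v w) (v w : α) :
    (∃ z, IsKPair r z v w ∧ r z C) ↔ P v w := by
  constructor
  · rintro ⟨z, hz, hzC⟩
    obtain ⟨v', w', hz', hP⟩ := (hC z).1 hzC
    obtain ⟨rfl, rfl⟩ := hz.inj hz'
    exact hP
  · intro hP
    obtain ⟨z, hz⟩ := exists_isKPair hpair v w
    exact ⟨z, hz, (hC z).2 ⟨v, w, hz, hP⟩⟩

theorem Extensional.isExtract_iff_eq (hext : Extensional r) {w v e : α} (he : IsExtract r e v) :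
    IsExtract r w v ↔ w = e :=
  ⟨fun hw => hext w e fun x => (hw x).trans (he x).symm, fun h => h ▸ he⟩

theorem mem_iff_mem_self_of_mem_iff_or_eq {P : α} (hP : ∀ x, r x P ↔ r x x ∨ x = P) (x : α) :
    r x P ↔ r x x := by
  have hPP : r P P := (hP P).2 (.inr rfl)
  rw [hP x]
  exact ⟨fun h => h.elim id fun hx => hx ▸ hPP, .inl⟩

theorem mem_iff_mem_self_of_mem_iff_and_ne {N : α} (hN : ∀ x, r x N ↔ r x x ∧ x ≠ N) (x : α) :
    r x N ↔ r x x := by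
  have hNN : ¬ r N N := fun h => ((hN N).1 h).2 rfl
  rw [hN x]
  exact ⟨And.left, fun hx => ⟨hx, by rintro rfl; exact hNN hx⟩⟩

end Membership

theorem snoc_snoc_snoc_comp_castAdd {α : Type*} {n : ℕ} (xs : Fin n → α) (p q r : α) :
    (Fin.snoc (Fin.snoc (Fin.snoc xs p) q) r : Fin (n + 3) → α) ∘ Fin.castAdd 3 = xs :=
  funext fun i => by
    change (Fin.snoc (Fin.snoc (Fin.snoc xs p) q) r : Fin (n + 3) → α)
      (Fin.castSucc (Fin.castSucc (Fin.castSucc i))) = xs i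
    simp only [Fin.snoc_castSucc]

section Semantics

variable {M : Type*} [L.Structure M]

def mem (x y : M) : Prop := Structure.RelMap memRel ![x, y]

@[simp]
theorem realize_memF {n : ℕ} (t₁ t₂ : L.Term (Empty ⊕ Fin n)) (v : Empty → M) (xs : Fin n → M) :
    (memF t₁ t₂).Realize v xs ↔ mem (t₁.realize (Sum.elim v xs)) (t₂.realize (Sum.elim v xs)) := by
  simp [memF, mem, BoundedFormula.realize_rel₂]

@[simp]
theorem realize_isPairF {n : ℕ} (z a b : L.Term (Empty ⊕ Fin n)) (v : Empty → M)
    (xs : Fin n → M) :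
    (isPairF z a b).Realize v xs ↔
      IsKPair mem (z.realize (Sum.elim v xs)) (a.realize (Sum.elim v xs))
        (b.realize (Sum.elim v xs)) := by
  simp [isPairF, IsKPair, tl, Sum.elim_comp_map, snoc_snoc_snoc_comp_castAdd, Fin.snoc, and_assoc]

@[simp]
theorem realize_wEqExtractF (v : Empty → M) (xs : Fin 3 → M) :
    wEqExtractF.Realize v xs ↔ IsExtract mem (xs 2) (xs 1) := by
  simp only [wEqExtractF, BoundedFormula.realize_all, BoundedFormula.realize_iff,
    BoundedFormula.realize_ex, BoundedFormula.realize_inf, realize_memF, realize_isPairF]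
  rfl

theorem realize_extAx : M ⊨ extAx ↔ Extensional (mem : M → M → Prop) := by
  simp [extAx, Extensional, Sentence.Realize, Formula.Realize, Fin.snoc]

theorem realize_pairAx :
    M ⊨ pairAx ↔ ∀ a b : M, ∃ y, ∀ x, mem x y ↔ x = a ∨ x = b := by
  simp [pairAx, Sentence.Realize, Formula.Realize, Fin.snoc]

theorem realize_axA : M ⊨ axA ↔
    ∀ z : M, mem z (cA : M) ↔ ∃ v w, IsKPair mem z v w ∧ (mem w w ∨ IsExtract mem w v) := by
  simp [axA, Sentence.Realize, Formula.Realize, Fin.snoc]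

theorem realize_axB : M ⊨ axB ↔
    ∀ z : M, mem z (cB : M) ↔ ∃ v w, IsKPair mem z v w ∧ (mem w w ∧ ¬ IsExtract mem w v) := by
  simp [axB, Sentence.Realize, Formula.Realize, Fin.snoc]

theorem realize_axHp : M ⊨ axHp ↔ IsExtract mem (cHp : M) (cA : M) := by
  simp [axHp, IsExtract, Sentence.Realize, Formula.Realize, Fin.snoc]

theorem realize_axHm : M ⊨ axHm ↔ IsExtract mem (cHm : M) (cB : M) := by
  simp [axHm, IsExtract, Sentence.Realize, Formula.Realize, Fin.snoc]

end Semantics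

section Model

variable (M : Type*) [L.Structure M] [M ⊨ TH]

theorem extensional_mem : Extensional (mem : M → M → Prop) :=
  realize_extAx.1 (TH.realize_sentence_of_mem (by simp [TH]))

theorem exists_forall_mem_iff_eq_or_eq : ∀ a b : M, ∃ y, ∀ x, mem x y ↔ x = a ∨ x = b :=
  realize_pairAx.1 (TH.realize_sentence_of_mem (by simp [TH]))

theorem mem_cHp_iff (x : M) : mem x (cHp : M) ↔ mem x x := by
  have hA := realize_axA.1 (TH.realize_sentence_of_mem (M := M) (by simp [TH]))
  have hHp := realize_axHp.1 (TH.realize_sentence_of_mem (M := M) (by simp [TH]))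
  refine mem_iff_mem_self_of_mem_iff_or_eq (fun y => ?_) x
  rw [hHp y, exists_isKPair_and_mem_iff (exists_forall_mem_iff_eq_or_eq M) hA,
    (extensional_mem M).isExtract_iff_eq hHp]

theorem mem_cHm_iff (x : M) : mem x (cHm : M) ↔ mem x x := by
  have hB := realize_axB.1 (TH.realize_sentence_of_mem (M := M) (by simp [TH]))
  have hHm := realize_axHm.1 (TH.realize_sentence_of_mem (M := M) (by simp [TH]))
  refine mem_iff_mem_self_of_mem_iff_and_ne (fun y => ?_) x
  rw [hHm y, exists_isKPair_and_mem_iff (exists_forall_mem_iff_eq_or_eq M) hB,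
    (extensional_mem M).isExtract_iff_eq hHm]

theorem cHp_eq_cHm : (cHp : M) = cHm :=
  extensional_mem M _ _ fun x => (mem_cHp_iff M x).trans (mem_cHm_iff M x).symm

end Model

/-- `T_H` semantically entails `∀x(x∈H⁻ → x∈H⁺)` and `∀x(x∈H⁺ → x∈H⁻)`, and hence,
by extensionality, `T_H` semantically entails `H⁺ = H⁻`. -/
theorem TH_Hp_eq_Hm :
    (TH ⊨ᵇ ((∀' (memF (&0) (Constants.term cHm) ⟹ memF (&0) (Constants.term cHp))) : L.Sentence)) ∧
    (TH ⊨ᵇ ((∀' (memF (&0) (Constants.term cHp) ⟹ memF (&0) (Constants.term cHm))) : L.Sentence)) ∧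
    (TH ⊨ᵇ (((Constants.term cHp : L.Term (Empty ⊕ Fin 0)) =' (Constants.term cHm)) : L.Sentence)) := by
  refine ⟨fun M _ _ => ?_, fun M _ _ => ?_, fun M _ _ => ?_⟩ <;> simp [cHp_eq_cHm M]

end CoRussellParadox
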